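/- Let K be a compact Hausdorff space. Then K is a KLΣ(≤ω)-space if and only if K is a continuous image of a compact Hausdorff metrizably fibered space, i.e., there exist a compact Hausdorff space L, a continuous surjection L → K, a metrizable space M and a continuous map g : L → M such that g⁻¹(z) is metrizable for every z ∈ M. -/
import Mathlib


open TopologicalSpace

/-- A topological space `X` is a `KLΣ(≤ω)`-space if there exist a compact metrizable
space `M` and a compact-valued upper semicontinuous onto set-valued map `p : M → Set X`
all of whose values are metrizable. -/
def IsKLSigmaLeOmega (X : Type*) [TopologicalSpace X] : Prop :=
  ∃ (M : Type) (_ : TopologicalSpace M),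
    CompactSpace M ∧ MetrizableSpace M ∧
    ∃ p : M → Set X,
      (⋃ z, p z) = Set.univ ∧
      (∀ z, IsCompact (p z)) ∧
      (∀ U : Set X, IsOpen U → IsOpen {z | p z ⊆ U}) ∧
      ∀ z, MetrizableSpace (p z)

/-- A topological space `X` is metrizably fibered if there is a continuous map from `X`
to a metrizable space all of whose fibers are metrizable. -/
def MetrizablyFibered (X : Type*) [TopologicalSpace X] : Prop :=
  ∃ (M : Type) (_ : TopologicalSpace M), MetrizableSpace M ∧
    ∃ g : X → M, Continuous g ∧ ∀ z : M, MetrizableSpace ↥(g ⁻¹' {z})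

open Set in
lemma metrizable_of_image {X Y : Type*} [TopologicalSpace X] [TopologicalSpace Y]
    [CompactSpace X] [MetrizableSpace X] [CompactSpace Y] [T2Space Y]
    {f : X → Y} (hf : Continuous f) (hs : Function.Surjective f) :
    MetrizableSpace Y := by
  haveI : SecondCountableTopology X := inferInstance
  set B := countableBasis X with hB
  have hBb : IsTopologicalBasis B := isBasis_countableBasis X
  have hcl : IsClosedMap f := hf.isClosedMap
  -- candidate basis for Y
  set F : Finset B → Set Y := fun s => (f '' (⋃ u ∈ s, (u : Set X))ᶜ)ᶜ with hF
  have hopen : ∀ s, IsOpen (F s) := by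
    intro s
    have : IsClosed (f '' (⋃ u ∈ s, (u : Set X))ᶜ) := by
      apply hcl
      exact (isOpen_biUnion fun u _ => hBb.isOpen u.2).isClosed_compl
    simpa [hF] using this.isOpen_compl
  have hbasis : IsTopologicalBasis (Set.range F) := by
    apply isTopologicalBasis_of_isOpen_of_nhds
    · rintro _ ⟨s, rfl⟩; exact hopen s
    · intro y W hyW hW
      have hfib : IsCompact (f ⁻¹' {y}) :=
        (IsClosed.preimage hf isClosed_singleton).isCompact
      have hsub : f ⁻¹' {y} ⊆ f ⁻¹' W := by
        intro x hx; simp only [mem_preimage, mem_singleton_iff] at hx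
        simp [mem_preimage, hx, hyW]
      -- cover the fiber by basis elements inside f⁻¹' W
      have hcov : f ⁻¹' {y} ⊆ ⋃ (u : {u : B // (u : Set X) ⊆ f ⁻¹' W}), (u : Set X) := by
        intro x hx
        obtain ⟨u, huB, hxu, huW⟩ :=
          hBb.exists_subset_of_mem_open (hsub hx) (hW.preimage hf)
        exact mem_iUnion.2 ⟨⟨⟨u, huB⟩, huW⟩, hxu⟩
      obtain ⟨t, ht⟩ := hfib.elim_finite_subcover
        (fun u : {u : B // (u : Set X) ⊆ f ⁻¹' W} => (u : Set X))
        (fun u => hBb.isOpen u.1.2) hcov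
      classical
      set s : Finset B := t.image Subtype.val with hsdef
      have hUW : (⋃ u ∈ s, (u : Set X)) ⊆ f ⁻¹' W := by
        intro x hx
        obtain ⟨u, hu, hxu⟩ := mem_iUnion₂.1 hx
        obtain ⟨v, hv, rfl⟩ := Finset.mem_image.1 hu
        exact v.2 hxu
      have hfibU : f ⁻¹' {y} ⊆ ⋃ u ∈ s, (u : Set X) := by
        intro x hx
        obtain ⟨u, hxu⟩ := mem_iUnion.1 (ht hx)
        obtain ⟨hu, hxu⟩ := mem_iUnion.1 hxu
        exact mem_iUnion₂.2 ⟨u.1, Finset.mem_image_of_mem _ hu, hxu⟩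
      refine ⟨F s, ⟨s, rfl⟩, ?_, ?_⟩
      · simp only [hF, mem_compl_iff, mem_image, not_exists]
        intro x hxc
        exact hxc.1 (hfibU (by simp [hxc.2]))
      · intro y' hy'
        obtain ⟨x, rfl⟩ := hs y'
        simp only [hF, mem_compl_iff, mem_image] at hy'
        have : x ∈ ⋃ u ∈ s, (u : Set X) := by
          by_contra hx; exact hy' ⟨x, hx, rfl⟩
        exact hUW this
  haveI : SecondCountableTopology Y := hbasis.secondCountableTopology (countable_range F)
  infer_instance

universe u

open Set in
/-- A compact Hausdorff space `K` is a `KLΣ(≤ω)`-space if and only if `K` is a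
continuous image of a compact Hausdorff metrizably fibered space. -/
theorem isKLSigmaLeOmega_iff_image_of_metrizablyFibered
    (K : Type u) [TopologicalSpace K] [CompactSpace K] [T2Space K] :
    IsKLSigmaLeOmega K ↔
      ∃ (L : Type u) (_ : TopologicalSpace L), CompactSpace L ∧ T2Space L ∧
        (∃ f : L → K, Continuous f ∧ Function.Surjective f) ∧ MetrizablyFibered L := by
  constructor
  · rintro ⟨M, tM, hMc, hMm, p, ponto, pcomp, pusc, pmet⟩
    letI := tM; haveI := hMc; haveI := hMm
    set S : Set (M × K) := {q | q.2 ∈ p q.1} with hS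
    have hLcl : IsClosed S := by
      rw [← isOpen_compl_iff, isOpen_iff_forall_mem_open]
      rintro ⟨z, x⟩ hzx
      simp only [hS, mem_compl_iff, mem_setOf_eq] at hzx
      obtain ⟨U, V, hU, hV, hpU, hxV, hUV⟩ :=
        SeparatedNhds.of_isCompact_isCompact (pcomp z) isCompact_singleton
          (disjoint_singleton_right.2 hzx)
      refine ⟨{w | p w ⊆ U} ×ˢ V, ?_, (pusc U hU).prod hV, ⟨hpU, hxV rfl⟩⟩
      rintro ⟨w, x'⟩ ⟨hw, hx'⟩ hmem
      exact Set.disjoint_left.1 hUV (hw hmem) hx'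
    haveI : CompactSpace ↥S := isCompact_iff_compactSpace.1 hLcl.isCompact
    refine ⟨↥S, inferInstance, inferInstance, inferInstance, ⟨fun q => q.1.2, ?_, ?_⟩, ?_⟩
    · exact continuous_snd.comp continuous_subtype_val
    · intro x
      have : x ∈ ⋃ z, p z := ponto ▸ mem_univ x
      obtain ⟨z, hz⟩ := mem_iUnion.1 this
      exact ⟨⟨(z, x), hz⟩, rfl⟩
    · refine ⟨M, inferInstance, hMm, fun q => q.1.1,
        continuous_fst.comp continuous_subtype_val, fun z => ?_⟩
      haveI : CompactSpace ↥((fun q : ↥S => q.1.1) ⁻¹' {z}) :=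
        isCompact_iff_compactSpace.1
          ((isClosed_singleton.preimage
            (continuous_fst.comp continuous_subtype_val)).isCompact)
      haveI := pmet z
      set φ : ↥((fun q : ↥S => q.1.1) ⁻¹' {z}) → ↥(p z) :=
        fun q => ⟨q.1.1.2, by
          have h1 : q.1.1.1 = z := q.2
          have h2 : q.1.1.2 ∈ p q.1.1.1 := q.1.2
          rwa [h1] at h2⟩ with hφ
      have hφc : Continuous φ :=
        (continuous_snd.comp
          (continuous_subtype_val.comp continuous_subtype_val)).subtype_mk _
      have hφi : Function.Injective φ := by
        rintro a b hab
        have hk : a.1.1.2 = b.1.1.2 := congrArg Subtype.val hab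
        have hm : a.1.1.1 = b.1.1.1 := by
          have ha : a.1.1.1 = z := a.2
          have hb : b.1.1.1 = z := b.2
          rw [ha, hb]
        exact Subtype.ext (Subtype.ext (Prod.ext hm hk))
      exact ((hφc.isClosedEmbedding hφi).toIsEmbedding).metrizableSpace
  · rintro ⟨L, tL, hLc, hLt, ⟨f, hf, hfs⟩, M, tM, hMm, g, hg, hfib⟩
    letI := tL; letI := tM; haveI := hLc; haveI := hLt; haveI := hMm
    haveI : CompactSpace ↥(Set.range g) :=
      isCompact_iff_compactSpace.1 (isCompact_range hg)
    refine ⟨↥(Set.range g), inferInstance, inferInstance, inferInstance,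
      fun z => f '' (g ⁻¹' {(z : M)}), ?_, ?_, ?_, ?_⟩
    · ext x
      simp only [mem_iUnion, mem_univ, iff_true]
      obtain ⟨l, rfl⟩ := hfs x
      exact ⟨⟨g l, l, rfl⟩, l, rfl, rfl⟩
    · exact fun z => ((isClosed_singleton.preimage hg).isCompact).image hf
    · intro U hU
      have heq : {z : ↥(Set.range g) | f '' (g ⁻¹' {(z : M)}) ⊆ U}
          = (Subtype.val ⁻¹' (g '' (f ⁻¹' Uᶜ)))ᶜ := by
        ext z
        constructor
        · rintro hz ⟨l, hlU, hgl⟩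
          exact hlU (hz ⟨l, hgl, rfl⟩)
        · rintro hz x ⟨l, hgl, rfl⟩
          by_contra hxU
          exact hz ⟨l, hxU, hgl⟩
      rw [heq]
      have hcomp : IsCompact (g '' (f ⁻¹' Uᶜ)) :=
        ((hU.isClosed_compl.preimage hf).isCompact).image hg
      exact ((hcomp.isClosed).preimage continuous_subtype_val).isOpen_compl
    · intro z
      haveI : CompactSpace ↥(g ⁻¹' {(z : M)}) :=
        isCompact_iff_compactSpace.1 ((isClosed_singleton.preimage hg).isCompact)
      haveI := hfib (z : M)
      haveI : CompactSpace ↥(f '' (g ⁻¹' {(z : M)})) :=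
        isCompact_iff_compactSpace.1
          (((isClosed_singleton.preimage hg).isCompact).image hf)
      exact metrizable_of_image
        (f := fun l : ↥(g ⁻¹' {(z : M)}) => (⟨f l.1, ⟨l.1, l.2, rfl⟩⟩ : ↥(f '' (g ⁻¹' {(z : M)}))))
        ((hf.comp continuous_subtype_val).subtype_mk _)
        (by rintro ⟨x, l, hl, rfl⟩; exact ⟨⟨l, hl⟩, rfl⟩)
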